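/- Let d, m, ρ be positive integers with m = d + ρ, let Σ^{(d)} be a finite index set, and suppose given rationals m_σ ≥ 0 (σ ∈ Σ^{(d)}) with Σ_σ m_σ = 1, a finite set R of 'rays' with positive rationals a_v ≤ 1 (v ∈ R), |R| = m, subsets ρ(σ) ⊆ R with |ρ(σ)| = d for each σ, a positive rational i, and pairings ⟨v, C_σ⟩ satisfying ⟨v, C_σ⟩ = -a_v whenever v ∈ ρ(σ), ⟨v, C_σ⟩ + a_v ≥ i whenever v ∉ ρ(σ), and Σ_σ m_σ ⟨v, C_σ⟩ = 0 for each v ∈ R. Then i·ρ = i·(m - d) ≤ Σ_{v∈R} a_v. -/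
import Mathlib


/-- Combinatorial core of the inequality `i_X·ρ_X ≤ Σ a_v`: with convex weights `m_σ`
summing to 1, sets `ρ(σ)` of cardinality `d` inside a set `R` of `m = d + ρ` rays,
`0 < a_v ≤ 1`, and pairings satisfying `⟨v,C_σ⟩ = -a_v` for `v ∈ ρ(σ)`,
`⟨v,C_σ⟩ + a_v ≥ i` for `v ∉ ρ(σ)`, and `Σ_σ m_σ⟨v,C_σ⟩ = 0`, one has `i·ρ ≤ Σ_{v∈R} a_v`. -/
theorem stmt_6 {ι V : Type*} (d m ρ : ℕ)
    (hd : 0 < d) (hm : 0 < m) (hρ : 0 < ρ) (hsum : m = d + ρ)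
    (S : Finset ι) (w : ι → ℚ) (hw : ∀ σ ∈ S, 0 ≤ w σ) (hw1 : ∑ σ ∈ S, w σ = 1)
    (R : Finset V) (hR : R.card = m)
    (a : V → ℚ) (ha : ∀ v ∈ R, 0 < a v ∧ a v ≤ 1)
    (rays : ι → Finset V) (hrays : ∀ σ ∈ S, rays σ ⊆ R ∧ (rays σ).card = d)
    (i : ℚ) (hi : 0 < i)
    (pair : V → ι → ℚ)
    (hin : ∀ σ ∈ S, ∀ v ∈ rays σ, pair v σ = -a v)
    (hout : ∀ σ ∈ S, ∀ v ∈ R, v ∉ rays σ → i ≤ pair v σ + a v)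
    (hzero : ∀ v ∈ R, ∑ σ ∈ S, w σ * pair v σ = 0) :
    i * ρ ≤ ∑ v ∈ R, a v := by
  classical
  set A := ∑ v ∈ R, a v with hA
  -- key estimate for each σ ∈ S
  have key : ∀ σ ∈ S, i * ρ - A ≤ ∑ v ∈ R, pair v σ := by
    intro σ hσ
    obtain ⟨hsub, hcard⟩ := hrays σ hσ
    have hsplit : ∑ v ∈ R, pair v σ =
        ∑ v ∈ rays σ, pair v σ + ∑ v ∈ R \ rays σ, pair v σ := by
      rw [← Finset.sum_sdiff hsub]; ring
    have h1 : ∑ v ∈ rays σ, pair v σ = -∑ v ∈ rays σ, a v := by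
      rw [← Finset.sum_neg_distrib]
      exact Finset.sum_congr rfl fun v hv => hin σ hσ v hv
    have h2 : ∑ v ∈ R \ rays σ, (i - a v) ≤ ∑ v ∈ R \ rays σ, pair v σ := by
      apply Finset.sum_le_sum
      intro v hv
      have := hout σ hσ v (Finset.mem_sdiff.mp hv).1 (Finset.mem_sdiff.mp hv).2
      linarith
    have hcard2 : (R \ rays σ).card = ρ := by
      rw [Finset.card_sdiff_of_subset hsub, hR, hcard, hsum]; omega
    have h3 : ∑ v ∈ R \ rays σ, (i - a v) =
        (ρ : ℚ) * i - ∑ v ∈ R \ rays σ, a v := by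
      rw [Finset.sum_sub_distrib, Finset.sum_const, hcard2, nsmul_eq_mul]
    have h4 : ∑ v ∈ rays σ, a v + ∑ v ∈ R \ rays σ, a v = A := by
      rw [hA, ← Finset.sum_sdiff hsub]; ring
    rw [hsplit, h1]
    linarith
  -- double counting
  have hz : (0:ℚ) = ∑ σ ∈ S, w σ * ∑ v ∈ R, pair v σ := by
    have : ∑ v ∈ R, ∑ σ ∈ S, w σ * pair v σ = 0 :=
      Finset.sum_eq_zero fun v hv => hzero v hv
    rw [Finset.sum_comm] at this
    rw [← this]
    exact Finset.sum_congr rfl fun σ _ => (Finset.mul_sum _ _ _).symm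
  have hge : ∑ σ ∈ S, w σ * (i * ρ - A) ≤ ∑ σ ∈ S, w σ * ∑ v ∈ R, pair v σ := by
    apply Finset.sum_le_sum
    intro σ hσ
    exact mul_le_mul_of_nonneg_left (key σ hσ) (hw σ hσ)
  have : ∑ σ ∈ S, w σ * (i * ρ - A) = i * ρ - A := by
    rw [← Finset.sum_mul, hw1, one_mul]
  linarith
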